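/- arXiv:2405.00806 — 7 statements merged into one kernel-verified Lean document; each statement's English description precedes it below -/
import Mathlib

section
/- There exists an explicit finite constant, namely L⁰ := max( max(B₁', L_bloc·(ζ^{β−1} + 1)) + L_G·(β·ζ^{β−1} + 1), (L_bloc + L_G)·(max(ζ^{β−1}, 1) + 1) + L_G·ζ^{β−1} ), such that for all distinct x, y > 0: (y/(x − y))·( (b(x) − b(0))/x − (b(y) − b(0))/y ) ≤ L⁰ − L_G·min(β − 1, 1)·y·max(x, y)^{β−2}. -/
/-!
Put `φ t = b t + L_G * t ^ β` and `K = max B₁' (L_bloc * (ζ ^ (β - 1) + 1)) + L_G * β * ζ ^ (β - 1)`.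
The map `t ↦ K * t - φ t` is monotone on `(0, ∞)`: on `[ζ, ∞)` by the derivative bound, on
`(0, ζ]` by the one-sided Lipschitz bound and the convexity of `t ^ β`, and the two pieces glue at
`ζ`. So every chord slope of `φ` is at most `K`. For `u < v`, Bernoulli's inequality gives
`v ^ β - u ^ β ≥ (v - u) * (min (β - 1) 1 * v ^ (β - 1) + u ^ (β - 1))`, so the chord slope of `b`
stays below `K` by `L_G * (min (β - 1) 1 * v ^ (β - 1) + u ^ (β - 1))`, which absorbs the growth
term `-(b u - b 0) / u ≤ L_G * (u ^ (β - 1) + 1)`. Finally, the quotient plus the penalty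
`L_G * min (β - 1) 1 * y * max x y ^ (β - 2)` is exactly
`slope b u v + L_G * min (β - 1) 1 * v ^ (β - 1) - (b u - b 0) / u` for `(u, v) = (x, y)` when
`x < y`, and `y / x ≤ 1` times it for `(u, v) = (y, x)` when `y < x`.
-/

open Set

lemma monotoneOn_of_hasDerivAt_nonneg {D : Set ℝ} (hD : Convex ℝ D) {f f' : ℝ → ℝ}
    (hf : ∀ x ∈ D, HasDerivAt f (f' x) x) (hf' : ∀ x ∈ D, 0 ≤ f' x) : MonotoneOn f D :=
  monotoneOn_of_hasDerivWithinAt_nonneg hD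
    (fun x hx ↦ (hf x hx).continuousAt.continuousWithinAt)
    (fun x hx ↦ (hf x (interior_subset hx)).hasDerivWithinAt)
    (fun x hx ↦ hf' x (interior_subset hx))

lemma min_mul_one_sub_le_one_sub_rpow {r p : ℝ} (hr₀ : 0 ≤ r) (hr₁ : r ≤ 1) (hp : 0 ≤ p) :
    min p 1 * (1 - r) ≤ 1 - r ^ p := by
  rcases le_total p 1 with hp₁ | hp₁
  · have bernoulli := rpow_one_add_le_one_add_mul_self (s := r - 1) (by linarith) hp hp₁
    rw [add_sub_cancel] at bernoulli
    rw [min_eq_left hp₁]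
    linarith
  · have h := Real.rpow_le_rpow_of_exponent_ge' hr₀ hr₁ zero_le_one hp₁
    rw [Real.rpow_one] at h
    rw [min_eq_right hp₁]
    linarith

lemma rpow_eq_mul_rpow_sub_one {x : ℝ} (hx : 0 < x) (p : ℝ) : x ^ p = x * x ^ (p - 1) := by
  rw [Real.rpow_sub_one hx.ne', mul_div_cancel₀ _ hx.ne']

lemma sub_mul_le_rpow_sub_rpow {β u v : ℝ} (hβ : 1 ≤ β) (hu : 0 < u) (huv : u ≤ v) :
    (v - u) * (min (β - 1) 1 * v ^ (β - 1) + u ^ (β - 1)) ≤ v ^ β - u ^ β := by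
  have hv : 0 < v := hu.trans_le huv
  have h := min_mul_one_sub_le_one_sub_rpow (div_nonneg hu.le hv.le) ((div_le_one hv).2 huv)
    (sub_nonneg.2 hβ)
  rw [Real.div_rpow hu.le hv.le] at h
  have key : min (β - 1) 1 * v ^ (β - 1) * (v - u) ≤ v * v ^ (β - 1) - v * u ^ (β - 1) := by
    calc min (β - 1) 1 * v ^ (β - 1) * (v - u)
        = v * v ^ (β - 1) * (min (β - 1) 1 * (1 - u / v)) := by field_simp
      _ ≤ v * v ^ (β - 1) * (1 - u ^ (β - 1) / v ^ (β - 1)) := by gcongr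
      _ = v * v ^ (β - 1) - v * u ^ (β - 1) := by field_simp
  rw [rpow_eq_mul_rpow_sub_one hv β, rpow_eq_mul_rpow_sub_one hu β]
  linarith

lemma monotoneOn_mul_sub_rpow {β ζ : ℝ} (hβ : 1 ≤ β) :
    MonotoneOn (fun t ↦ β * ζ ^ (β - 1) * t - t ^ β) (Icc 0 ζ) := by
  refine monotoneOn_of_hasDerivAt_nonneg (convex_Icc 0 ζ)
    (fun t _ ↦ ((hasDerivAt_id t).const_mul _).sub (Real.hasDerivAt_rpow_const (Or.inr hβ)))
    fun t ht ↦ ?_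
  have h : t ^ (β - 1) ≤ ζ ^ (β - 1) := Real.rpow_le_rpow ht.1 ht.2 (by linarith)
  simp only [mul_one, sub_nonneg]
  gcongr

section
variable {β L_G L_bloc B₁' ζ : ℝ} {b : ℝ → ℝ}

lemma monotoneOn_mul_sub_of_deriv_le (hβ : 1 ≤ β)
    (hderiv : ∀ x : ℝ, ζ ≤ x →
      DifferentiableAt ℝ b x ∧ deriv b x ≤ B₁' - β * L_G * x ^ (β - 1)) :
    MonotoneOn (fun t ↦ B₁' * t - (b t + L_G * t ^ β)) (Ici ζ) := by
  refine monotoneOn_of_hasDerivAt_nonneg (convex_Ici ζ)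
    (fun t ht ↦ ((hasDerivAt_id t).const_mul _).sub
      ((hderiv t ht).1.hasDerivAt.add ((Real.hasDerivAt_rpow_const (Or.inr hβ)).const_mul _)))
    fun t ht ↦ ?_
  have h := (hderiv t ht).2
  simp only [mul_one]
  linarith

lemma monotoneOn_mul_sub_of_slope_le (hβ : 1 ≤ β) (hLb : 0 ≤ L_bloc)
    (hlip : ∀ x y : ℝ, 0 < x → 0 < y → x ≠ y →
      (b x - b y) / (x - y) ≤ L_bloc * (1 + (max x y) ^ (β - 1))) :
    MonotoneOn (fun t ↦ L_bloc * (ζ ^ (β - 1) + 1) * t - b t) (Ioc 0 ζ) := by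
  intro u hu v hv huv
  rcases huv.eq_or_lt with rfl | huv
  · rfl
  have hslope := hlip v u hv.1 hu.1 huv.ne'
  rw [max_eq_left huv.le, div_le_iff₀ (sub_pos.2 huv)] at hslope
  have hpow : v ^ (β - 1) ≤ ζ ^ (β - 1) := Real.rpow_le_rpow hv.1.le hv.2 (by linarith)
  have := mul_le_mul_of_nonneg_left hpow (mul_nonneg hLb (sub_pos.2 huv).le)
  simp only
  linarith

lemma monotoneOn_mul_sub_add_rpow (hβ : 1 ≤ β) (hLG : 0 ≤ L_G) (hLb : 0 ≤ L_bloc) (hζ : 0 < ζ)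
    (hlip : ∀ x y : ℝ, 0 < x → 0 < y → x ≠ y →
      (b x - b y) / (x - y) ≤ L_bloc * (1 + (max x y) ^ (β - 1)))
    (hderiv : ∀ x : ℝ, ζ ≤ x →
      DifferentiableAt ℝ b x ∧ deriv b x ≤ B₁' - β * L_G * x ^ (β - 1)) :
    MonotoneOn
      (fun t ↦ (max B₁' (L_bloc * (ζ ^ (β - 1) + 1)) + L_G * (β * ζ ^ (β - 1))) * t
        - (b t + L_G * t ^ β)) (Ioi 0) := by
  set C := max B₁' (L_bloc * (ζ ^ (β - 1) + 1))
  have hZ : 0 ≤ ζ ^ (β - 1) := Real.rpow_nonneg hζ.le _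
  have near : MonotoneOn (fun t ↦ (C + L_G * (β * ζ ^ (β - 1))) * t - (b t + L_G * t ^ β))
      (Ioc 0 ζ) := by
    intro u hu v hv huv
    have hb := monotoneOn_mul_sub_of_slope_le hβ hLb hlip hu hv huv
    have hpow := monotoneOn_mul_sub_rpow hβ (Ioc_subset_Icc_self hu) (Ioc_subset_Icc_self hv) huv
    have hC : L_bloc * (ζ ^ (β - 1) + 1) * (v - u) ≤ C * (v - u) :=
      mul_le_mul_of_nonneg_right (le_max_right _ _) (sub_nonneg.2 huv)
    have := mul_le_mul_of_nonneg_left hpow hLG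
    simp only at hb this ⊢
    linarith
  have far : MonotoneOn (fun t ↦ (C + L_G * (β * ζ ^ (β - 1))) * t - (b t + L_G * t ^ β))
      (Ici ζ) := by
    intro u hu v hv huv
    have hb := monotoneOn_mul_sub_of_deriv_le hβ hderiv hu hv huv
    have hC : B₁' * (v - u) ≤ C * (v - u) :=
      mul_le_mul_of_nonneg_right (le_max_left _ _) (sub_nonneg.2 huv)
    have := mul_le_mul_of_nonneg_right
      (mul_nonneg hLG (mul_nonneg (by linarith : (0 : ℝ) ≤ β) hZ)) (sub_nonneg.2 huv)
    simp only at hb ⊢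
    linarith
  rw [← Ioc_union_Ici_eq_Ioi hζ]
  exact near.union_right far (isGreatest_Ioc hζ) isLeast_Ici

lemma neg_sub_div_le_of_abs_sub_le (hLG : 0 ≤ L_G)
    (hgrowth : ∀ x : ℝ, 0 ≤ x → |b x - b 0| ≤ L_G * max (x ^ β) x) {u : ℝ} (hu : 0 < u) :
    -((b u - b 0) / u) ≤ L_G * (u ^ (β - 1) + 1) := by
  have hmax : max (u ^ β) u ≤ u ^ β + u :=
    max_le (by linarith) (by linarith [Real.rpow_nonneg hu.le β])
  have h := (abs_le.1 (hgrowth u hu.le)).1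
  have := mul_le_mul_of_nonneg_left hmax hLG
  have hsplit : L_G * (u ^ (β - 1) + 1) * u = L_G * (u ^ β + u) := by
    rw [rpow_eq_mul_rpow_sub_one hu β]; ring
  rw [← neg_div, div_le_iff₀ hu, hsplit]
  linarith

lemma slope_add_sub_div_le (hβ : 1 ≤ β) (hLG : 0 ≤ L_G) (hLb : 0 ≤ L_bloc) (hζ : 0 < ζ)
    (hgrowth : ∀ x : ℝ, 0 ≤ x → |b x - b 0| ≤ L_G * max (x ^ β) x)
    (hlip : ∀ x y : ℝ, 0 < x → 0 < y → x ≠ y →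
      (b x - b y) / (x - y) ≤ L_bloc * (1 + (max x y) ^ (β - 1)))
    (hderiv : ∀ x : ℝ, ζ ≤ x →
      DifferentiableAt ℝ b x ∧ deriv b x ≤ B₁' - β * L_G * x ^ (β - 1))
    {u v : ℝ} (hu : 0 < u) (huv : u < v) :
    (b v - b u) / (v - u) + L_G * min (β - 1) 1 * v ^ (β - 1) - (b u - b 0) / u
      ≤ max B₁' (L_bloc * (ζ ^ (β - 1) + 1)) + L_G * (β * ζ ^ (β - 1) + 1) := by
  have hmono := monotoneOn_mul_sub_add_rpow hβ hLG hLb hζ hlip hderiv hu (hu.trans huv) huv.le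
  have hpow := mul_le_mul_of_nonneg_left (sub_mul_le_rpow_sub_rpow hβ hu huv.le) hLG
  have hgrow := neg_sub_div_le_of_abs_sub_le hLG hgrowth hu
  have hslope : (b v - b u) / (v - u) ≤ max B₁' (L_bloc * (ζ ^ (β - 1) + 1))
      + L_G * (β * ζ ^ (β - 1)) - L_G * (min (β - 1) 1 * v ^ (β - 1) + u ^ (β - 1)) := by
    rw [div_le_iff₀ (sub_pos.2 huv)]
    simp only at hmono
    linarith
  linarith

end

theorem drift_quotient_estimate_general
    (β L_G L_bloc B₁' ζ : ℝ)
    (hβ : 1 < β) (hLG : 0 ≤ L_G) (hLb : 0 < L_bloc) (hζ : 0 < ζ)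
    (b : ℝ → ℝ)
    (hgrowth : ∀ x : ℝ, 0 ≤ x → |b x - b 0| ≤ L_G * max (x ^ β) x)
    (hlip : ∀ x y : ℝ, 0 < x → 0 < y → x ≠ y →
      (b x - b y) / (x - y) ≤ L_bloc * (1 + (max x y) ^ (β - 1)))
    (hderiv : ∀ x : ℝ, ζ ≤ x →
      DifferentiableAt ℝ b x ∧ deriv b x ≤ B₁' - β * L_G * x ^ (β - 1)) :
    ∀ x y : ℝ, 0 < x → 0 < y → x ≠ y →
      y / (x - y) * ((b x - b 0) / x - (b y - b 0) / y)
        ≤ max (max B₁' (L_bloc * (ζ ^ (β - 1) + 1)) + L_G * (β * ζ ^ (β - 1) + 1))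
              ((L_bloc + L_G) * (max (ζ ^ (β - 1)) 1 + 1))
          - L_G * min (β - 1) 1 * y * (max x y) ^ (β - 2) := by
  intro x y hx hy hne
  have key {u v : ℝ} (hu : 0 < u) (huv : u < v) :=
    slope_add_sub_div_le hβ.le hLG hLb.le hζ hgrowth hlip hderiv hu huv
  set A := max B₁' (L_bloc * (ζ ^ (β - 1) + 1)) + L_G * (β * ζ ^ (β - 1) + 1)
  have hA : 0 ≤ A := add_nonneg (le_max_of_le_right (by positivity)) (by positivity)
  suffices y / (x - y) * ((b x - b 0) / x - (b y - b 0) / y)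
      + L_G * min (β - 1) 1 * y * (max x y) ^ (β - 2) ≤ A by
    linarith [le_max_left A ((L_bloc + L_G) * (max (ζ ^ (β - 1)) 1 + 1))]
  have hsplit : β - 2 = β - 1 - 1 := by ring
  rcases hne.lt_or_gt with hxy | hyx
  · rw [max_eq_right hxy.le, hsplit, Real.rpow_sub_one hy.ne']
    convert key hx hxy using 1
    field_simp
    ring
  · rw [max_eq_left hyx.le, hsplit, Real.rpow_sub_one hx.ne']
    calc _ = y / x * ((b x - b y) / (x - y) + L_G * min (β - 1) 1 * x ^ (β - 1)
            - (b y - b 0) / y) := by field_simp; ring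
      _ ≤ y / x * A := mul_le_mul_of_nonneg_left (key hy hyx) (by positivity)
      _ ≤ A := mul_le_of_le_one_left hA ((div_le_one hx).2 hyx.le)

/-- Lemma 3.6(b): if b has polynomial growth |b(x) − b(0)| ≤ L_G·max(x^β, x), is one-sided
locally Lipschitz with constant L_bloc, and is differentiable on [ζ, ∞) with
b'(x) ≤ B₁' − β·L_G·x^{β−1}, then for all distinct x, y > 0,
(y/(x−y))·((b(x)−b(0))/x − (b(y)−b(0))/y) ≤ L⁰ − L_G·min(β−1,1)·y·max(x,y)^{β−2}, where
L⁰ = max( max(B₁', L_bloc(ζ^{β−1}+1)) + L_G(βζ^{β−1}+1),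
          (L_bloc + L_G)(max(ζ^{β−1},1)+1) ). -/
theorem drift_quotient_estimate
    (β L_G L_bloc B₁' ζ : ℝ)
    (hβ : 1 < β) (hLG : 0 ≤ L_G) (hLb : 0 < L_bloc) (hB₁' : 0 ≤ B₁') (hζ : 0 < ζ)
    (b : ℝ → ℝ)
    (hgrowth : ∀ x : ℝ, 0 ≤ x → |b x - b 0| ≤ L_G * max (x ^ β) x)
    (hlip : ∀ x y : ℝ, 0 < x → 0 < y → x ≠ y →
      (b x - b y) / (x - y) ≤ L_bloc * (1 + (max x y) ^ (β - 1)))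
    (hderiv : ∀ x : ℝ, ζ ≤ x →
      DifferentiableAt ℝ b x ∧ deriv b x ≤ B₁' - β * L_G * x ^ (β - 1)) :
    ∀ x y : ℝ, 0 < x → 0 < y → x ≠ y →
      y / (x - y) * ((b x - b 0) / x - (b y - b 0) / y)
        ≤ max (max B₁' (L_bloc * (ζ ^ (β - 1) + 1)) + L_G * (β * ζ ^ (β - 1) + 1))
              ((L_bloc + L_G) * (max (ζ ^ (β - 1)) 1 + 1))
          - L_G * min (β - 1) 1 * y * (max x y) ^ (β - 2) :=
  drift_quotient_estimate_general β L_G L_bloc B₁' ζ hβ hLG hLb hζ b hgrowth hlip hderiv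
end

section
/- For all distinct x, y > 0: (y/(x − y))·( (b(x) − b(0))/x − (b(y) − b(0))/y ) ≤ B₁' + L_G − L_G·min(β − 1, 1)·y·max(x, y)^{β−2}. -/
/-!
Writing the quotient as `(b x - b y)/(x - y) - (b x - b 0)/x`, the derivative bound says that
`t ↦ b t - B₁' t + L_G t^β` is antitone, so the first term is at most
`B₁' - L_G (x^β - y^β)/(x - y)`, while the growth bound gives `-(b x - b 0)/x ≤ L_G (x^(β-1) + 1)`.
It remains to bound the slope of `t^β` from below: it equals `x^(β-1) + y` times the slope of
`t^(β-1)`, and the slope of `t^γ` is at least `min γ 1 · max(x, y)^(γ-1)`, by monotonicity of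
`t^(γ-1)` for `γ ≥ 1` and by Bernoulli's inequality for `γ < 1`.
-/

open Real Set

theorem mul_rpow_sub_one_mul_sub_le_rpow_sub_rpow {γ x y : ℝ} (hγ : 0 < γ) (hy : 0 < y)
    (hyx : y < x) : min γ 1 * x ^ (γ - 1) * (x - y) ≤ x ^ γ - y ^ γ := by
  have hx : 0 < x := hy.trans hyx
  have hx_rpow : x ^ γ = x ^ (γ - 1) * x := by rw [rpow_sub_one hx.ne', div_mul_cancel₀ _ hx.ne']
  rcases le_total 1 γ with hγ1 | hγ1
  · have : y ^ (γ - 1) ≤ x ^ (γ - 1) := rpow_le_rpow hy.le hyx.le (by linarith)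
    have hy_rpow : y ^ γ = y ^ (γ - 1) * y := by rw [rpow_sub_one hy.ne', div_mul_cancel₀ _ hy.ne']
    rw [min_eq_right hγ1, hx_rpow, hy_rpow]
    nlinarith
  · -- Bernoulli's inequality `(1 + s) ^ γ ≤ 1 + γ s` at `1 + s = y / x`, scaled by `x ^ γ`.
    have hbern := rpow_one_add_le_one_add_mul_self (s := y / x - 1)
      (by linarith [div_pos hy hx]) hγ.le hγ1
    rw [add_sub_cancel, div_rpow hy.le hx.le, div_le_iff₀ (rpow_pos_of_pos hx γ)] at hbern
    have : (1 + γ * (y / x - 1)) * x ^ γ = x ^ γ - γ * x ^ (γ - 1) * (x - y) := by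
      rw [hx_rpow]; field_simp; ring
    rw [min_eq_left hγ1]
    linarith

theorem min_mul_max_rpow_le_rpow_slope {γ x y : ℝ} (hγ : 0 < γ) (hx : 0 < x) (hy : 0 < y)
    (hxy : x ≠ y) : min γ 1 * max x y ^ (γ - 1) ≤ (x ^ γ - y ^ γ) / (x - y) := by
  rcases hxy.lt_or_gt with hlt | hlt
  · rw [max_eq_right hlt.le, ← neg_div_neg_eq, neg_sub, neg_sub,
      le_div_iff₀ (sub_pos.2 hlt)]
    exact mul_rpow_sub_one_mul_sub_le_rpow_sub_rpow hγ hx hlt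
  · rw [max_eq_left hlt.le, le_div_iff₀ (sub_pos.2 hlt)]
    exact mul_rpow_sub_one_mul_sub_le_rpow_sub_rpow hγ hy hlt

theorem rpow_slope_eq {β x y : ℝ} (hx : 0 < x) (hy : 0 < y) (hxy : x ≠ y) :
    (x ^ β - y ^ β) / (x - y) = x ^ (β - 1) + y * ((x ^ (β - 1) - y ^ (β - 1)) / (x - y)) := by
  have hsub : x - y ≠ 0 := sub_ne_zero.2 hxy
  rw [rpow_sub_one hx.ne', rpow_sub_one hy.ne']
  field_simp
  ring

theorem antitoneOn_sub_mul_add_mul_rpow {b : ℝ → ℝ} {β L B : ℝ}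
    (hderiv : ∀ x : ℝ, 0 < x → DifferentiableAt ℝ b x ∧ deriv b x ≤ B - β * L * x ^ (β - 1)) :
    AntitoneOn (fun t => b t - B * t + L * t ^ β) (Ioi 0) := by
  have hasDeriv : ∀ t ∈ Ioi (0 : ℝ),
      HasDerivAt (fun t => b t - B * t + L * t ^ β) (deriv b t - B + L * (β * t ^ (β - 1))) t :=
    fun t ht => by
      have := ((hderiv t ht).1.hasDerivAt.sub ((hasDerivAt_id' t).const_mul B)).add
        ((hasDerivAt_rpow_const (p := β) (Or.inl (ne_of_gt ht))).const_mul L)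
      rwa [mul_one] at this
  refine antitoneOn_of_deriv_nonpos (convex_Ioi 0)
    (fun t ht => (hasDeriv t ht).continuousAt.continuousWithinAt) ?_ ?_
  all_goals rw [interior_Ioi]
  · exact fun t ht => (hasDeriv t ht).differentiableAt.differentiableWithinAt
  · intro t ht
    rw [(hasDeriv t ht).deriv]
    linarith [(hderiv t ht).2]

theorem sub_div_sub_le_sub_mul_rpow_slope {b : ℝ → ℝ} {β L B x y : ℝ}
    (hderiv : ∀ x : ℝ, 0 < x → DifferentiableAt ℝ b x ∧ deriv b x ≤ B - β * L * x ^ (β - 1))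
    (hx : 0 < x) (hy : 0 < y) (hxy : x ≠ y) :
    (b x - b y) / (x - y) ≤ B - L * ((x ^ β - y ^ β) / (x - y)) := by
  have hslope := (antitoneOn_sub_mul_add_mul_rpow hderiv).slope_nonpos hy hx
  have hsub : x - y ≠ 0 := sub_ne_zero.2 hxy
  have : slope (fun t => b t - B * t + L * t ^ β) y x
      = (b x - b y) / (x - y) - B + L * ((x ^ β - y ^ β) / (x - y)) := by
    rw [slope_def_field]
    field_simp
    ring
  linarith

theorem neg_div_le_of_abs_le_mul_max_rpow {u L β x : ℝ} (hL : 0 ≤ L) (hx : 0 < x)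
    (hu : |u| ≤ L * max (x ^ β) x) : -u / x ≤ L * (x ^ (β - 1) + 1) := by
  have hmax : max (x ^ β) x ≤ x ^ β + x :=
    max_le (by linarith) (by linarith [rpow_nonneg hx.le β])
  have : -u ≤ L * (x ^ β + x) :=
    (neg_le_abs u).trans (hu.trans (mul_le_mul_of_nonneg_left hmax hL))
  rw [div_le_iff₀ hx, rpow_sub_one hx.ne']
  field_simp
  linarith

theorem drift_quotient_estimate_global_general
    (β L_G B₁' : ℝ) (hβ : 1 < β) (hLG : 0 ≤ L_G)
    (b : ℝ → ℝ)
    (hgrowth : ∀ x : ℝ, 0 ≤ x → |b x - b 0| ≤ L_G * max (x ^ β) x)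
    (hderiv : ∀ x : ℝ, 0 < x →
      DifferentiableAt ℝ b x ∧ deriv b x ≤ B₁' - β * L_G * x ^ (β - 1)) :
    ∀ x y : ℝ, 0 < x → 0 < y → x ≠ y →
      y / (x - y) * ((b x - b 0) / x - (b y - b 0) / y)
        ≤ B₁' + L_G - L_G * min (β - 1) 1 * y * (max x y) ^ (β - 2) := by
  intro x y hx hy hxy
  have hquot : y / (x - y) * ((b x - b 0) / x - (b y - b 0) / y)
      = (b x - b y) / (x - y) + -(b x - b 0) / x := by
    field_simp [sub_ne_zero.2 hxy]
    ring
  have hslope := sub_div_sub_le_sub_mul_rpow_slope hderiv hx hy hxy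
  rw [rpow_slope_eq hx hy hxy] at hslope
  have hgrow := neg_div_le_of_abs_le_mul_max_rpow hLG hx (hgrowth x hx.le)
  have hpow := min_mul_max_rpow_le_rpow_slope (sub_pos.2 hβ) hx hy hxy
  rw [sub_sub, one_add_one_eq_two] at hpow
  have hpow_scaled := mul_le_mul_of_nonneg_left hpow (mul_nonneg hLG hy.le)
  rw [hquot]
  linarith

/-- Lemma 3.6(b), global case: if b has polynomial growth |b(x) − b(0)| ≤ L_G·max(x^β, x)
and is differentiable on (0, ∞) with b'(x) ≤ B₁' − β·L_G·x^{β−1}, then for all distinct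
x, y > 0, (y/(x−y))·((b(x)−b(0))/x − (b(y)−b(0))/y)
≤ B₁' + L_G − L_G·min(β−1,1)·y·max(x,y)^{β−2}. -/
theorem drift_quotient_estimate_global
    (β L_G B₁' : ℝ) (hβ : 1 < β) (hLG : 0 ≤ L_G) (hB₁' : 0 ≤ B₁')
    (b : ℝ → ℝ)
    (hgrowth : ∀ x : ℝ, 0 ≤ x → |b x - b 0| ≤ L_G * max (x ^ β) x)
    (hderiv : ∀ x : ℝ, 0 < x →
      DifferentiableAt ℝ b x ∧ deriv b x ≤ B₁' - β * L_G * x ^ (β - 1)) :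
    ∀ x y : ℝ, 0 < x → 0 < y → x ≠ y →
      y / (x - y) * ((b x - b 0) / x - (b y - b 0) / y)
        ≤ B₁' + L_G - L_G * min (β - 1) 1 * y * (max x y) ^ (β - 2) :=
  drift_quotient_estimate_global_general β L_G B₁' hβ hLG b hgrowth hderiv
end

section
/- For all distinct x, y > 0: (y/(x − y)²)·( σ(x)/x − σ(y)/y )² ≤ 2·(Σ² + α²·Σ'²)·max(x, y)^{2α−3}. -/
set_option maxHeartbeats 1000000

/-- Mean value theorem bound for σ on [y, x]. -/
lemma mvt_aux (α S' : ℝ) (hα : 1 < α) (hS' : 0 ≤ S')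
    (σ : ℝ → ℝ)
    (hderiv : ∀ x : ℝ, 0 < x →
      DifferentiableAt ℝ σ x ∧ |deriv σ x| ≤ α * S' * x ^ (α - 1))
    (x y : ℝ) (hy : 0 < y) (hxy : y ≤ x) :
    |σ x - σ y| ≤ α * S' * x ^ (α - 1) * |x - y| := by
  have hx : 0 < x := lt_of_lt_of_le hy hxy
  have key := Convex.norm_image_sub_le_of_norm_hasDerivWithin_le
    (f := σ) (f' := deriv σ) (C := α * S' * x ^ (α - 1)) (s := Set.Icc y x)
    (fun t ht => ((hderiv t (lt_of_lt_of_le hy ht.1)).1.hasDerivAt).hasDerivWithinAt)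
    (fun t ht => by
      have ht0 : 0 < t := lt_of_lt_of_le hy ht.1
      have h1 := (hderiv t ht0).2
      have h2 : t ^ (α - 1) ≤ x ^ (α - 1) :=
        Real.rpow_le_rpow ht0.le ht.2 (by linarith)
      calc ‖deriv σ t‖ = |deriv σ t| := rfl
        _ ≤ α * S' * t ^ (α - 1) := h1
        _ ≤ α * S' * x ^ (α - 1) :=
            mul_le_mul_of_nonneg_left h2 (mul_nonneg (by linarith) hS'))
    (convex_Icc y x)
    (Set.right_mem_Icc.2 hxy) (Set.left_mem_Icc.2 hxy)
  simpa [Real.norm_eq_abs, abs_sub_comm] using key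

/-- Lemma 3.6(σ): if σ(x)² ≤ Σ²x^{2α} and σ is differentiable on (0, ∞) with
|σ'(x)| ≤ α·Σ'·x^{α−1}, then for all distinct x, y > 0,
(y/(x−y)²)·(σ(x)/x − σ(y)/y)² ≤ 2(Σ² + α²Σ'²)·max(x,y)^{2α−3}. -/
theorem diffusion_quotient_estimate
    (α S S' : ℝ) (hα : 1 < α) (hS : 0 < S) (hS' : 0 ≤ S')
    (σ : ℝ → ℝ)
    (hgrowth : ∀ x : ℝ, 0 ≤ x → (σ x) ^ 2 ≤ S ^ 2 * x ^ (2 * α))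
    (hderiv : ∀ x : ℝ, 0 < x →
      DifferentiableAt ℝ σ x ∧ |deriv σ x| ≤ α * S' * x ^ (α - 1)) :
    ∀ x y : ℝ, 0 < x → 0 < y → x ≠ y →
      y / (x - y) ^ 2 * (σ x / x - σ y / y) ^ 2
        ≤ 2 * (S ^ 2 + α ^ 2 * S' ^ 2) * (max x y) ^ (2 * α - 3) := by
  intro x y hx hy hne
  have hd2 : (0:ℝ) < (x - y)^2 := by
    have : x - y ≠ 0 := sub_ne_zero.2 hne
    positivity
  have hE : σ x / x - σ y / y = (σ x * y - σ y * x) / (x * y) := by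
    field_simp
  have key : y / (x - y)^2 * ((σ x * y - σ y * x)/(x*y))^2
      = (σ x * y - σ y * x)^2 / ((x-y)^2 * (x^2*y)) := by
    field_simp
  rw [hE, key, div_le_iff₀ (by positivity)]
  have hN : (σ x * y - σ y * x)^2
      ≤ 2*((σ x - σ y)*y)^2 + 2*(σ y*(x-y))^2 := by
    nlinarith [sq_nonneg ((σ x - σ y)*y + σ y*(x-y))]
  have hN2 : (σ x * y - σ y * x)^2
      ≤ 2*((σ x - σ y)*x)^2 + 2*(σ x*(x-y))^2 := by
    nlinarith [sq_nonneg ((σ x - σ y)*x + σ x*(x-y))]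
  rcases le_total y x with hle | hle
  · -- case y ≤ x, max = x
    have hM : max x y = x := max_eq_left hle
    rw [hM]
    set P := x ^ (2*α - 3) with hPdef
    have hP : 0 < P := Real.rpow_pos_of_pos hx _
    have e2 : (x ^ (α-1))^2 = P * x := by
      rw [← Real.rpow_natCast (x ^ (α-1)) 2, ← Real.rpow_mul hx.le, hPdef,
        ← Real.rpow_add_one hx.ne']
      congr 1
      push_cast; ring
    have hmvt := mvt_aux α S' hα hS' σ hderiv x y hy hle
    have hsq' : (σ x - σ y)^2 ≤ α^2*S'^2 * P * x * (x-y)^2 := by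
      have h1 : (σ x - σ y)^2 ≤ (α * S' * x ^ (α-1) * |x - y|)^2 := by
        rw [← sq_abs (σ x - σ y)]
        exact pow_le_pow_left₀ (abs_nonneg _) hmvt 2
      calc (σ x - σ y)^2 ≤ (α * S' * x ^ (α-1) * |x - y|)^2 := h1
        _ = α^2*S'^2 * (x ^ (α-1))^2 * |x-y|^2 := by ring
        _ = α^2*S'^2 * P * x * (x-y)^2 := by rw [sq_abs, e2]; ring
    have hy2a : y ^ (2*α) ≤ P * x^2 * y := by
      have h1 : y ^ (2*α - 1) * y = y ^ (2*α) := by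
        rw [← Real.rpow_add_one hy.ne']; ring_nf
      have h2 : y ^ (2*α-1) ≤ x ^ (2*α-1) :=
        Real.rpow_le_rpow hy.le hle (by linarith)
      have h3 : x ^ (2*α-1) = P * x^2 := by
        rw [hPdef, show (2*α-1) = (2*α-3) + 1 + 1 by ring, Real.rpow_add hx,
          Real.rpow_add hx, Real.rpow_one]; ring
      calc y ^ (2*α) = y ^ (2*α-1) * y := h1.symm
        _ ≤ x ^ (2*α-1) * y := mul_le_mul_of_nonneg_right h2 hy.le
        _ = P * x^2 * y := by rw [h3]
    have hgy : σ y ^ 2 ≤ S^2 * (P * x^2 * y) := by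
      calc σ y ^ 2 ≤ S^2 * y ^ (2*α) := hgrowth y hy.le
        _ ≤ S^2 * (P * x^2 * y) := mul_le_mul_of_nonneg_left hy2a (by positivity)
    have hxyy : x * y^2 ≤ x^2 * y := by nlinarith
    have A := mul_le_mul_of_nonneg_right hsq' (sq_nonneg y)
    have B := mul_le_mul_of_nonneg_right hgy (sq_nonneg (x-y))
    have C := mul_le_mul_of_nonneg_left hxyy
      (show (0:ℝ) ≤ α^2*S'^2*P*(x-y)^2 by positivity)
    nlinarith [A, B, C, hN]
  · -- case x ≤ y, max = y
    have hM : max x y = y := max_eq_right hle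
    rw [hM]
    set P := y ^ (2*α - 3) with hPdef
    have hP : 0 < P := Real.rpow_pos_of_pos hy _
    have e2 : (y ^ (α-1))^2 = P * y := by
      rw [← Real.rpow_natCast (y ^ (α-1)) 2, ← Real.rpow_mul hy.le, hPdef,
        ← Real.rpow_add_one hy.ne']
      congr 1
      push_cast; ring
    have hmvt := mvt_aux α S' hα hS' σ hderiv y x hx hle
    have hsq' : (σ x - σ y)^2 ≤ α^2*S'^2 * P * y * (x-y)^2 := by
      have h1 : (σ x - σ y)^2 ≤ (α * S' * y ^ (α-1) * |y - x|)^2 := by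
        rw [← sq_abs (σ x - σ y), show σ x - σ y = -(σ y - σ x) by ring, abs_neg]
        exact pow_le_pow_left₀ (abs_nonneg _) hmvt 2
      calc (σ x - σ y)^2 ≤ (α * S' * y ^ (α-1) * |y - x|)^2 := h1
        _ = α^2*S'^2 * (y ^ (α-1))^2 * |y-x|^2 := by ring
        _ = α^2*S'^2 * P * y * (x-y)^2 := by rw [sq_abs, e2]; ring
    have hx2a : x ^ (2*α) ≤ P * y * x^2 := by
      have h1 : x ^ (2*α - 2) * x^2 = x ^ (2*α) := by
        rw [show (x:ℝ)^2 = x * x by ring, ← mul_assoc,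
          ← Real.rpow_add_one hx.ne', ← Real.rpow_add_one hx.ne']
        ring_nf
      have h2 : x ^ (2*α-2) ≤ y ^ (2*α-2) :=
        Real.rpow_le_rpow hx.le hle (by linarith)
      have h3 : y ^ (2*α-2) = P * y := by
        rw [hPdef, show (2*α-2) = (2*α-3) + 1 by ring, Real.rpow_add hy,
          Real.rpow_one]
      calc x ^ (2*α) = x ^ (2*α-2) * x^2 := h1.symm
        _ ≤ y ^ (2*α-2) * x^2 := mul_le_mul_of_nonneg_right h2 (sq_nonneg x)
        _ = P * y * x^2 := by rw [h3]
    have hgx : σ x ^ 2 ≤ S^2 * (P * y * x^2) := by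
      calc σ x ^ 2 ≤ S^2 * x ^ (2*α) := hgrowth x hx.le
        _ ≤ S^2 * (P * y * x^2) := mul_le_mul_of_nonneg_left hx2a (by positivity)
    have A := mul_le_mul_of_nonneg_right hsq' (sq_nonneg x)
    have B := mul_le_mul_of_nonneg_right hgx (sq_nonneg (x-y))
    nlinarith [A, B, hN2]
end

section
/- For all distinct x, y > 0: (b(x) − b(y))/(x − y) ≤ B₁ − B₂·max(x, y)^{2α−2}. -/
/-- Remark 1.2 (ii): for the prototypical drift b(x) = b₀ + B₁x − B₂x^{2α−1} with B₂ ≥ 0,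
for all distinct x, y > 0, (b(x) − b(y))/(x − y) ≤ B₁ − B₂·max(x,y)^{2α−2}. -/
theorem prototypical_drift_one_sided_lipschitz
    (α b₀ B₁ B₂ : ℝ) (hα : 1 < α) (hB₂ : 0 ≤ B₂) :
    ∀ x y : ℝ, 0 < x → 0 < y → x ≠ y →
      ((b₀ + B₁ * x - B₂ * x ^ (2 * α - 1)) - (b₀ + B₁ * y - B₂ * y ^ (2 * α - 1))) / (x - y)
        ≤ B₁ - B₂ * (max x y) ^ (2 * α - 2) := by
  have key : ∀ x y : ℝ, 0 < y → y < x →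
      ((b₀ + B₁ * x - B₂ * x ^ (2 * α - 1)) - (b₀ + B₁ * y - B₂ * y ^ (2 * α - 1))) / (x - y)
        ≤ B₁ - B₂ * (max x y) ^ (2 * α - 2) := by
    intro x y hy hxy
    have hx : 0 < x := hy.trans hxy
    have hs : 0 < x - y := sub_pos.mpr hxy
    have he : (0:ℝ) ≤ 2 * α - 2 := by linarith
    rw [max_eq_left hxy.le, div_le_iff₀ hs]
    -- key inequality: x^(2α-1) - y^(2α-1) ≥ x^(2α-2)*(x-y)
    have h1 : y ^ (2 * α - 2) ≤ x ^ (2 * α - 2) :=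
      Real.rpow_le_rpow hy.le hxy.le he
    have hxp : x ^ (2 * α - 1) = x ^ (2 * α - 2) * x := by
      rw [show 2 * α - 1 = (2 * α - 2) + 1 by ring, Real.rpow_add hx, Real.rpow_one]
    have hyp : y ^ (2 * α - 1) = y ^ (2 * α - 2) * y := by
      rw [show 2 * α - 1 = (2 * α - 2) + 1 by ring, Real.rpow_add hy, Real.rpow_one]
    have h2 : x ^ (2 * α - 2) * (x - y) ≤ x ^ (2 * α - 1) - y ^ (2 * α - 1) := by
      have : y ^ (2 * α - 2) * y ≤ x ^ (2 * α - 2) * y :=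
        mul_le_mul_of_nonneg_right h1 hy.le
      nlinarith [hxp, hyp]
    nlinarith [mul_le_mul_of_nonneg_left h2 hB₂]
  intro x y hx hy hne
  rcases hne.lt_or_gt with h | h
  · have := key y x hx h
    rw [max_comm] at this
    calc ((b₀ + B₁ * x - B₂ * x ^ (2 * α - 1)) - (b₀ + B₁ * y - B₂ * y ^ (2 * α - 1))) / (x - y)
        = ((b₀ + B₁ * y - B₂ * y ^ (2 * α - 1)) - (b₀ + B₁ * x - B₂ * x ^ (2 * α - 1))) / (y - x) := by
          rw [← neg_div_neg_eq]; ring_nf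
      _ ≤ _ := this
  · exact key x y hy h
end

section
/- Let ζ ≥ θ > 0 be reals and let x, y > 0 with x ≠ y. Then max( ⌊ζ/θ⌋·min(x, y)^{ζ−θ}, max(x, y)^{ζ−θ} ) ≤ (x^ζ − y^ζ)/(x^θ − y^θ) ≤ (ζ/θ)·max(x, y)^{ζ−θ}, where ⌊ζ/θ⌋ denotes the integer part of ζ/θ. -/
open Real

private lemma bern {p t : ℝ} (hp : 1 ≤ p) (ht : 0 ≤ t) : 1 + p * (t - 1) ≤ t ^ p := by
  have := one_add_mul_self_le_rpow_one_add (s := t - 1) (by linarith) hp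
  simpa using this

private lemma aux_est {p a b : ℝ} (hp : 1 ≤ p) (hb : 0 < b) (hab : b < a) :
    max ((⌊p⌋ : ℝ) * b ^ (p - 1)) (a ^ (p - 1)) ≤ (a ^ p - b ^ p) / (a - b) ∧
      (a ^ p - b ^ p) / (a - b) ≤ p * a ^ (p - 1) := by
  have ha : 0 < a := hb.trans hab
  have hd : 0 < a - b := by linarith
  have hp1 : 0 ≤ p - 1 := by linarith
  have hApos : 0 < a ^ p := Real.rpow_pos_of_pos ha p
  have hBpos : 0 < b ^ p := Real.rpow_pos_of_pos hb p
  have hBA : b ^ (p - 1) ≤ a ^ (p - 1) := Real.rpow_le_rpow hb.le hab.le hp1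
  have hbp : 0 < b ^ (p - 1) := Real.rpow_pos_of_pos hb _
  have h1 : 1 + p * (a / b - 1) ≤ (a / b) ^ p := bern hp (by positivity)
  have h2 : 1 + p * (b / a - 1) ≤ (b / a) ^ p := bern hp (by positivity)
  rw [Real.div_rpow ha.le hb.le] at h1
  rw [Real.div_rpow hb.le ha.le] at h2
  have h1c : b ^ p + p * b ^ (p - 1) * (a - b) ≤ a ^ p := by
    have h := mul_le_mul_of_nonneg_right h1 hBpos.le
    rw [div_mul_cancel₀ _ hBpos.ne'] at h
    calc b ^ p + p * b ^ (p - 1) * (a - b) = (1 + p * (a / b - 1)) * b ^ p := by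
          rw [Real.rpow_sub_one hb.ne']; field_simp
      _ ≤ a ^ p := h
  have h2c : a ^ p + p * a ^ (p - 1) * (b - a) ≤ b ^ p := by
    have h := mul_le_mul_of_nonneg_right h2 hApos.le
    rw [div_mul_cancel₀ _ hApos.ne'] at h
    calc a ^ p + p * a ^ (p - 1) * (b - a) = (1 + p * (b / a - 1)) * a ^ p := by
          rw [Real.rpow_sub_one ha.ne']; field_simp
      _ ≤ b ^ p := h
  have hM : a ^ (p - 1) * (a - b) ≤ a ^ p - b ^ p := by
    have hb' : b ^ (p - 1) * b ≤ a ^ (p - 1) * b := mul_le_mul_of_nonneg_right hBA hb.le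
    have e1 : a ^ (p - 1) * a = a ^ p := by rw [Real.rpow_sub_one ha.ne']; field_simp
    have e2 : b ^ (p - 1) * b = b ^ p := by rw [Real.rpow_sub_one hb.ne']; field_simp
    nlinarith [hb']
  refine ⟨max_le ?_ ?_, ?_⟩
  · rw [le_div_iff₀ hd]
    have hf : (⌊p⌋ : ℝ) ≤ p := Int.floor_le p
    nlinarith [mul_le_mul_of_nonneg_right (mul_le_mul_of_nonneg_right hf hbp.le) hd.le]
  · rw [le_div_iff₀ hd]; linarith
  · rw [div_le_iff₀ hd]; linarith

/-- Lemma A.2, estimate (A.1): for real exponents ζ ≥ θ > 0 and distinct x, y > 0,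
max( ⌊ζ/θ⌋·min(x,y)^{ζ−θ}, max(x,y)^{ζ−θ} ) ≤ (x^ζ − y^ζ)/(x^θ − y^θ)
≤ (ζ/θ)·max(x,y)^{ζ−θ}. -/
theorem power_quotient_estimate
    (ζ θ x y : ℝ) (hθ : 0 < θ) (hζθ : θ ≤ ζ) (hx : 0 < x) (hy : 0 < y) (hxy : x ≠ y) :
    max ((⌊ζ / θ⌋ : ℝ) * (min x y) ^ (ζ - θ)) ((max x y) ^ (ζ - θ))
        ≤ (x ^ ζ - y ^ ζ) / (x ^ θ - y ^ θ) ∧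
      (x ^ ζ - y ^ ζ) / (x ^ θ - y ^ θ) ≤ ζ / θ * (max x y) ^ (ζ - θ) := by
  -- reduce to aux_est with p = ζ/θ, a = (max x y)^θ, b = (min x y)^θ
  have hp : 1 ≤ ζ / θ := (one_le_div hθ).mpr hζθ
  wlog hlt : y < x generalizing x y
  · have hlt' : x < y := lt_of_le_of_ne (not_lt.mp hlt) hxy
    have := this y x hy hx (Ne.symm hxy) hlt'
    have hnum : (x ^ ζ - y ^ ζ) / (x ^ θ - y ^ θ) = (y ^ ζ - x ^ ζ) / (y ^ θ - x ^ θ) := by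
      rw [← neg_sub (y ^ ζ), ← neg_sub (y ^ θ), neg_div_neg_eq]
    rw [hnum, min_comm x y, max_comm x y]; exact this
  have key : ∀ z : ℝ, 0 < z → (z ^ θ) ^ (ζ / θ) = z ^ ζ := by
    intro z hz
    rw [← Real.rpow_mul hz.le]
    congr 1; field_simp
  have key2 : ∀ z : ℝ, 0 < z → (z ^ θ) ^ (ζ / θ - 1) = z ^ (ζ - θ) := by
    intro z hz
    rw [← Real.rpow_mul hz.le]
    congr 1; field_simp
  have hb : 0 < y ^ θ := Real.rpow_pos_of_pos hy θ
  have hab : y ^ θ < x ^ θ := Real.rpow_lt_rpow hy.le hlt hθ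
  have h := aux_est hp hb hab
  rw [key x hx, key y hy, key2 x hx, key2 y hy] at h
  rw [max_eq_left hlt.le, min_eq_right hlt.le]
  exact h
end

section
/- Let ζ > 0 and θ > 0 be reals and let x, y > 0 with x ≠ y. Then |(x^ζ − y^ζ)/(x^θ − y^θ)| ≤ max( min(x, y)^{ζ−θ}, (ζ/θ)·max(x, y)^{ζ−θ} ). -/
open Real

private lemma key_est (ζ θ x y : ℝ) (hζ : 0 < ζ) (hθ : 0 < θ) (hy : 0 < y) (hxy : y < x) :
    (x ^ ζ - y ^ ζ) / (x ^ θ - y ^ θ) ≤ max (y ^ (ζ - θ)) (ζ / θ * x ^ (ζ - θ)) := by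
  have hx : 0 < x := hy.trans hxy
  have hden : 0 < x ^ θ - y ^ θ := sub_pos.mpr (Real.rpow_lt_rpow hy.le hxy hθ)
  have hA : 0 < x ^ ζ := Real.rpow_pos_of_pos hx ζ
  have hB : 0 < y ^ ζ := Real.rpow_pos_of_pos hy ζ
  have hC : 0 < x ^ θ := Real.rpow_pos_of_pos hx θ
  have hD : 0 < y ^ θ := Real.rpow_pos_of_pos hy θ
  rw [div_le_iff₀ hden]
  rcases le_total ζ θ with h | h
  · -- bound by y ^ (ζ - θ)
    refine le_trans ?_ (mul_le_mul_of_nonneg_right (le_max_left _ _) hden.le)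
    have h1 : x ^ (ζ - θ) ≤ y ^ (ζ - θ) :=
      Real.rpow_le_rpow_of_nonpos hy hxy.le (by linarith)
    have hxs : x ^ ζ = x ^ θ * x ^ (ζ - θ) := by
      rw [← Real.rpow_add hx]; ring_nf
    have hys : y ^ ζ = y ^ θ * y ^ (ζ - θ) := by
      rw [← Real.rpow_add hy]; ring_nf
    nlinarith
  · -- bound by ζ/θ * x ^ (ζ - θ)
    refine le_trans ?_ (mul_le_mul_of_nonneg_right (le_max_right _ _) hden.le)
    set α := ζ / θ with hα
    have hα1 : 1 ≤ α := (one_le_div hθ).mpr h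
    have hsp : (0:ℝ) < (y / x) ^ θ := Real.rpow_pos_of_pos (div_pos hy hx) θ
    have hbern : 1 + α * ((y / x) ^ θ - 1) ≤ ((y / x) ^ θ) ^ α := by
      have := one_add_mul_self_le_rpow_one_add (s := (y / x) ^ θ - 1) (by linarith) hα1
      simpa using this
    have hsa : ((y / x) ^ θ) ^ α = (y / x) ^ ζ := by
      rw [← Real.rpow_mul (div_pos hy hx).le]
      congr 1
      rw [mul_comm, div_mul_cancel₀ _ hθ.ne']
    have hdζ : (y / x) ^ ζ = y ^ ζ / x ^ ζ := Real.div_rpow hy.le hx.le ζ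
    have hdθ : (y / x) ^ θ = y ^ θ / x ^ θ := Real.div_rpow hy.le hx.le θ
    rw [hsa, hdζ, hdθ] at hbern
    have h2 := mul_le_mul_of_nonneg_right hbern (le_of_lt (mul_pos hA hC))
    have e1 : (1 + α * (y ^ θ / x ^ θ - 1)) * (x ^ ζ * x ^ θ)
        = x ^ ζ * x ^ θ + α * (y ^ θ * x ^ ζ - x ^ θ * x ^ ζ) := by
      field_simp
    have e2 : y ^ ζ / x ^ ζ * (x ^ ζ * x ^ θ) = y ^ ζ * x ^ θ := by
      field_simp
    rw [e1, e2] at h2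
    have hsub : x ^ (ζ - θ) = x ^ ζ / x ^ θ := Real.rpow_sub hx ζ θ
    have e3 : α * x ^ (ζ - θ) * (x ^ θ - y ^ θ)
        = α * x ^ ζ * (x ^ θ - y ^ θ) / x ^ θ := by
      rw [hsub]; ring
    rw [e3, le_div_iff₀ hC]
    nlinarith

/-- Lemma A.2, estimate (A.2): for real exponents ζ > 0 and θ > 0 and distinct x, y > 0,
|(x^ζ − y^ζ)/(x^θ − y^θ)| ≤ max( min(x,y)^{ζ−θ}, (ζ/θ)·max(x,y)^{ζ−θ} ). -/
theorem power_quotient_estimate_abs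
    (ζ θ x y : ℝ) (hζ : 0 < ζ) (hθ : 0 < θ) (hx : 0 < x) (hy : 0 < y) (hxy : x ≠ y) :
    |(x ^ ζ - y ^ ζ) / (x ^ θ - y ^ θ)|
      ≤ max ((min x y) ^ (ζ - θ)) (ζ / θ * (max x y) ^ (ζ - θ)) := by
  rcases hxy.lt_or_gt with h | h
  · -- x < y
    rw [min_eq_left h.le, max_eq_right h.le]
    have key := key_est ζ θ y x hζ hθ hx h
    have hq : (x ^ ζ - y ^ ζ) / (x ^ θ - y ^ θ) = (y ^ ζ - x ^ ζ) / (y ^ θ - x ^ θ) := by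
      rw [← neg_div_neg_eq]; ring_nf
    have hnum : 0 < y ^ ζ - x ^ ζ := sub_pos.mpr (Real.rpow_lt_rpow hx.le h hζ)
    have hden : 0 < y ^ θ - x ^ θ := sub_pos.mpr (Real.rpow_lt_rpow hx.le h hθ)
    rw [hq, abs_of_pos (div_pos hnum hden)]
    exact key
  · -- y < x
    rw [min_eq_right h.le, max_eq_left h.le]
    have key := key_est ζ θ x y hζ hθ hy h
    have hnum : 0 < x ^ ζ - y ^ ζ := sub_pos.mpr (Real.rpow_lt_rpow hy.le h hζ)
    have hden : 0 < x ^ θ - y ^ θ := sub_pos.mpr (Real.rpow_lt_rpow hy.le h hθ)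
    rw [abs_of_pos (div_pos hnum hden)]
    exact key
end

section
/- (a) For every x > 0, φ(x) = B₁ + ((2α − 1)·b₀)/(2(α − 1)·x) + (b₀·c₂·Δt/(2(α − 1)))·x^{2α−3} + (x/(2(α − 1)))·φ'(x); in particular φ(x) > 0 at every critical point of φ (every x > 0 with φ'(x) = 0). (b) φ has exactly one zero ξ in (0,∞), and φ(x) > 0 for all 0 < x < ξ while φ(x) < 0 for all x > ξ. -/
/-!
Identity (a) is the computation of `φ'`; it amounts to `(x ^ (-2(α-1)) φ(x))' < 0`.
That monotonicity is visible without derivatives: `φ(x) = x ^ (2(α-1)) ψ(x)` with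
`ψ(x) = B₁ x^{-2(α-1)} - c₁ + b₀ x^{-(2α-1)} + b₀ c₂ Δt x⁻¹`, a constant plus non-increasing
powers, one of them strictly decreasing. Since `ψ → +∞` at `0⁺` and `ψ → -c₁ < 0` at `+∞`,
`ψ` has exactly one zero, where it changes sign, and `φ` has the sign of `ψ`.
-/

noncomputable section

/-- The function φ_{Δt}(x) = B₁ − c₁x^{2(α−1)} + b₀/x + b₀c₂Δt·x^{2α−3} governing the
asymptotic stability of the exponential Euler scheme (c₁ = Σ²/2 + B₂, c₂ = Σ² + B₂). -/
def phiStab (α b₀ B₁ c₁ c₂ Δt : ℝ) (x : ℝ) : ℝ :=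
  B₁ - c₁ * x ^ (2 * (α - 1)) + b₀ / x + b₀ * c₂ * Δt * x ^ (2 * α - 3)

open Filter Set Topology

def phiScaled (α b₀ B₁ c₁ c₂ Δt : ℝ) (x : ℝ) : ℝ :=
  B₁ * x ^ (-(2 * (α - 1))) - c₁ + b₀ * x ^ (-(2 * α - 1)) + b₀ * c₂ * Δt * x⁻¹

section

variable {α b₀ B₁ c₁ c₂ Δt : ℝ}

theorem phiStab_hasDerivAt {x : ℝ} (hx : 0 < x) :
    HasDerivAt (phiStab α b₀ B₁ c₁ c₂ Δt)
      (-(c₁ * (2 * (α - 1) * x ^ (2 * (α - 1) - 1))) - b₀ / x ^ 2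
        + b₀ * c₂ * Δt * ((2 * α - 3) * x ^ (2 * α - 3 - 1))) x := by
  have h₁ := Real.hasDerivAt_rpow_const (p := 2 * (α - 1)) (Or.inl hx.ne')
  have h₂ := Real.hasDerivAt_rpow_const (p := 2 * α - 3) (Or.inl hx.ne')
  have h₃ := (hasDerivAt_inv hx.ne').const_mul b₀
  exact ((((hasDerivAt_const x B₁).sub (h₁.const_mul c₁)).add h₃).add
    (h₂.const_mul (b₀ * c₂ * Δt))).congr_deriv (by ring)

theorem phiStab_eq_add_mul_deriv (hα : α ≠ 1) {x : ℝ} (hx : 0 < x) :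
    phiStab α b₀ B₁ c₁ c₂ Δt x
      = B₁ + (2 * α - 1) * b₀ / (2 * (α - 1) * x)
        + b₀ * c₂ * Δt / (2 * (α - 1)) * x ^ (2 * α - 3)
        + x / (2 * (α - 1)) * deriv (phiStab α b₀ B₁ c₁ c₂ Δt) x := by
  rw [(phiStab_hasDerivAt hx).deriv]
  have hp : x ^ (2 * (α - 1) - 1) = x ^ (2 * α - 3) := by congr 1; ring
  have hq : x ^ (2 * α - 3) = x ^ (2 * (α - 1)) / x := by
    rw [← Real.rpow_sub_one hx.ne']; congr 1; ring
  have hr : x ^ (2 * α - 3 - 1) = x ^ (2 * (α - 1)) / x / x := by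
    rw [Real.rpow_sub_one hx.ne', hq]
  have hα' : α - 1 ≠ 0 := sub_ne_zero.mpr hα
  unfold phiStab
  rw [hp, hr, hq]
  field_simp
  ring

theorem phiStab_pos_of_deriv_eq_zero (hα : 1 < α) (hb₀ : 0 < b₀) (hB₁ : 0 ≤ B₁)
    (hc₂ : 0 ≤ c₂) (hΔt : 0 ≤ Δt) {x : ℝ} (hx : 0 < x)
    (hd : deriv (phiStab α b₀ B₁ c₁ c₂ Δt) x = 0) :
    0 < phiStab α b₀ B₁ c₁ c₂ Δt x := by
  have hα' : 0 < α - 1 := sub_pos.mpr hα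
  rw [phiStab_eq_add_mul_deriv hα.ne' hx, hd, mul_zero, add_zero]
  have : 0 < (2 * α - 1) * b₀ / (2 * (α - 1) * x) := by
    apply div_pos <;> nlinarith
  positivity

theorem phiStab_eq_rpow_mul_phiScaled {x : ℝ} (hx : 0 < x) :
    phiStab α b₀ B₁ c₁ c₂ Δt x = x ^ (2 * (α - 1)) * phiScaled α b₀ B₁ c₁ c₂ Δt x := by
  have hp : 0 < x ^ (2 * (α - 1)) := Real.rpow_pos_of_pos hx _
  have h₁ : x ^ (-(2 * α - 1)) = (x ^ (2 * (α - 1)))⁻¹ * x⁻¹ := by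
    rw [Real.rpow_neg hx.le, ← mul_inv, ← Real.rpow_add_one hx.ne']; ring_nf
  have h₂ : x ^ (2 * α - 3) = x ^ (2 * (α - 1)) * x⁻¹ := by
    rw [← div_eq_mul_inv, ← Real.rpow_sub_one hx.ne']; ring_nf
  unfold phiStab phiScaled
  rw [Real.rpow_neg hx.le, h₁, h₂]
  field_simp

theorem phiScaled_strictAntiOn (hα : 1 ≤ α) (hb₀ : 0 < b₀) (hB₁ : 0 ≤ B₁)
    (hc₂ : 0 ≤ c₂) (hΔt : 0 ≤ Δt) :
    StrictAntiOn (phiScaled α b₀ B₁ c₁ c₂ Δt) (Ioi 0) := by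
  intro x hx y hy hxy
  have h₁ : y ^ (-(2 * (α - 1))) ≤ x ^ (-(2 * (α - 1))) :=
    Real.rpow_le_rpow_of_nonpos hx hxy.le (by linarith)
  have h₂ : y ^ (-(2 * α - 1)) < x ^ (-(2 * α - 1)) :=
    Real.rpow_lt_rpow_of_neg hx hxy (by linarith)
  have h₃ : y⁻¹ ≤ x⁻¹ := inv_anti₀ hx hxy.le
  have := mul_le_mul_of_nonneg_left h₁ hB₁
  have := mul_lt_mul_of_pos_left h₂ hb₀
  have := mul_le_mul_of_nonneg_left h₃ (by positivity : 0 ≤ b₀ * c₂ * Δt)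
  unfold phiScaled
  linarith

theorem phiScaled_continuousOn : ContinuousOn (phiScaled α b₀ B₁ c₁ c₂ Δt) (Ioi 0) := by
  intro x (hx : 0 < x)
  have h₁ := Real.continuousAt_rpow_const x (-(2 * (α - 1))) (Or.inl hx.ne')
  have h₂ := Real.continuousAt_rpow_const x (-(2 * α - 1)) (Or.inl hx.ne')
  have h₃ := continuousAt_inv₀ hx.ne'
  exact ((((h₁.const_mul B₁).sub continuousAt_const).add (h₂.const_mul b₀)).add
    (h₃.const_mul (b₀ * c₂ * Δt))).continuousWithinAt

theorem tendsto_phiScaled_nhdsGT_zero (hα : 1 ≤ α) (hb₀ : 0 < b₀) (hB₁ : 0 ≤ B₁)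
    (hc₂ : 0 ≤ c₂) (hΔt : 0 ≤ Δt) :
    Tendsto (phiScaled α b₀ B₁ c₁ c₂ Δt) (𝓝[>] 0) atTop := by
  have h := tendsto_atTop_add_const_right _ (-c₁)
    ((tendsto_rpow_neg_nhdsGT_zero (y := -(2 * α - 1)) (by linarith)).const_mul_atTop hb₀)
  refine tendsto_atTop_mono' _ ?_ h
  filter_upwards [self_mem_nhdsWithin] with x (hx : 0 < x)
  unfold phiScaled
  have : 0 ≤ B₁ * x ^ (-(2 * (α - 1))) := by positivity
  have : 0 ≤ b₀ * c₂ * Δt * x⁻¹ := by positivity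
  linarith

theorem tendsto_phiScaled_atTop (hα : 1 < α) :
    Tendsto (phiScaled α b₀ B₁ c₁ c₂ Δt) atTop (𝓝 (-c₁)) := by
  have h := ((((tendsto_rpow_neg_atTop (y := 2 * (α - 1)) (by linarith)).const_mul B₁).sub_const
    c₁).add ((tendsto_rpow_neg_atTop (y := 2 * α - 1) (by linarith)).const_mul b₀)).add
    (tendsto_inv_atTop_zero.const_mul (b₀ * c₂ * Δt))
  simp only [mul_zero, zero_sub, add_zero] at h
  exact h

theorem phiScaled_exists_zero (hα : 1 < α) (hb₀ : 0 < b₀) (hB₁ : 0 ≤ B₁) (hc₁ : 0 < c₁)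
    (hc₂ : 0 ≤ c₂) (hΔt : 0 ≤ Δt) : ∃ ξ, 0 < ξ ∧ phiScaled α b₀ B₁ c₁ c₂ Δt ξ = 0 := by
  obtain ⟨a, hψa, ha⟩ := (((tendsto_phiScaled_nhdsGT_zero hα.le hb₀ hB₁ hc₂ hΔt)
    |>.eventually_gt_atTop 0).and self_mem_nhdsWithin).exists
  obtain ⟨b, hψb, hab⟩ := (((tendsto_phiScaled_atTop hα).eventually_lt_const
    (neg_neg_of_pos hc₁)).and (eventually_gt_atTop a)).exists
  obtain ⟨ξ, hξ, hψξ⟩ := intermediate_value_Icc' hab.le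
    (phiScaled_continuousOn.mono fun x hx => lt_of_lt_of_le ha hx.1) ⟨hψb.le, hψa.le⟩
  exact ⟨ξ, lt_of_lt_of_le ha hξ.1, hψξ⟩

theorem phiStab_exists_unique_zero (hα : 1 < α) (hb₀ : 0 < b₀) (hB₁ : 0 ≤ B₁) (hc₁ : 0 < c₁)
    (hc₂ : 0 ≤ c₂) (hΔt : 0 ≤ Δt) :
    ∃ ξ : ℝ, 0 < ξ ∧ phiStab α b₀ B₁ c₁ c₂ Δt ξ = 0 ∧
      (∀ x : ℝ, 0 < x → phiStab α b₀ B₁ c₁ c₂ Δt x = 0 → x = ξ) ∧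
      (∀ x : ℝ, 0 < x → x < ξ → 0 < phiStab α b₀ B₁ c₁ c₂ Δt x) ∧
      (∀ x : ℝ, ξ < x → phiStab α b₀ B₁ c₁ c₂ Δt x < 0) := by
  obtain ⟨ξ, hξ, hψξ⟩ := phiScaled_exists_zero hα hb₀ hB₁ hc₁ hc₂ hΔt
  have hψ := phiScaled_strictAntiOn hα.le hb₀ hB₁ hc₂ hΔt (c₁ := c₁)
  have hpow {x : ℝ} (hx : 0 < x) : 0 < x ^ (2 * (α - 1)) := Real.rpow_pos_of_pos hx _
  refine ⟨ξ, hξ, by rw [phiStab_eq_rpow_mul_phiScaled hξ, hψξ, mul_zero], ?_, ?_, ?_⟩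
  · intro x hx hφx
    rw [phiStab_eq_rpow_mul_phiScaled hx, mul_eq_zero, or_iff_right (hpow hx).ne'] at hφx
    exact hψ.injOn hx hξ (hφx.trans hψξ.symm)
  · intro x hx hxξ
    rw [phiStab_eq_rpow_mul_phiScaled hx]
    exact mul_pos (hpow hx) (hψξ ▸ hψ hx hξ hxξ)
  · intro x hξx
    have hx := hξ.trans hξx
    rw [phiStab_eq_rpow_mul_phiScaled hx]
    exact mul_neg_of_pos_of_neg (hpow hx) (hψξ ▸ hψ hξ hx hξx)

end

/-- From the proof of Proposition 5.2: (a) the identity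
φ(x) = B₁ + (2α−1)b₀/(2(α−1)x) + (b₀c₂Δt/(2(α−1)))x^{2α−3} + (x/(2(α−1)))φ'(x) on (0,∞),
so φ is positive at each of its critical points; (b) φ has exactly one zero ξ in (0,∞),
with φ > 0 on (0,ξ) and φ < 0 on (ξ,∞). -/
theorem stability_function_scheme_unique_zero
    (α b₀ B₁ c₁ c₂ Δt : ℝ) (hα : 1 < α) (hb₀ : 0 < b₀) (hB₁ : 0 ≤ B₁)
    (hc₁ : 0 < c₁) (hc₂ : 0 ≤ c₂) (hΔt : 0 ≤ Δt) :
    (∀ x : ℝ, 0 < x →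
      phiStab α b₀ B₁ c₁ c₂ Δt x
        = B₁ + (2 * α - 1) * b₀ / (2 * (α - 1) * x)
          + b₀ * c₂ * Δt / (2 * (α - 1)) * x ^ (2 * α - 3)
          + x / (2 * (α - 1)) * deriv (phiStab α b₀ B₁ c₁ c₂ Δt) x) ∧
    (∀ x : ℝ, 0 < x → deriv (phiStab α b₀ B₁ c₁ c₂ Δt) x = 0 →
      0 < phiStab α b₀ B₁ c₁ c₂ Δt x) ∧
    ∃ ξ : ℝ, 0 < ξ ∧ phiStab α b₀ B₁ c₁ c₂ Δt ξ = 0 ∧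
      (∀ x : ℝ, 0 < x → phiStab α b₀ B₁ c₁ c₂ Δt x = 0 → x = ξ) ∧
      (∀ x : ℝ, 0 < x → x < ξ → 0 < phiStab α b₀ B₁ c₁ c₂ Δt x) ∧
      (∀ x : ℝ, ξ < x → phiStab α b₀ B₁ c₁ c₂ Δt x < 0) :=
  ⟨fun _ hx => phiStab_eq_add_mul_deriv hα.ne' hx,
    fun _ hx hd => phiStab_pos_of_deriv_eq_zero hα hb₀ hB₁ hc₂ hΔt hx hd,
    phiStab_exists_unique_zero hα hb₀ hB₁ hc₁ hc₂ hΔt⟩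

end
end
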